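/- In the likelihood-ratio filtration setup, suppose there exist constants c > 0, d > 0, F ≥ 0, a martingale (M_t)_{t=0}^T adapted to (ℱ_t) with M_0 = 0 and |M_t − M_{t−1}| ≤ d almost surely, and random variables D_t with |D_t| ≤ 2F almost surely, such that log ρ_{1:t} = −tc + D_t + M_t for every 1 ≤ t ≤ T. For each t set m_t := E[ρ_{1:t} r_t] and assume each ρ_{1:t} r_t is square-integrable, and let v^π := E[ ∑_{t=1}^T γ^{t−1} ρ_{1:t} r_t ]. Let S ⊆ {1, …, T} be the set of indices t with m_t > 0 and tc/2 ≥ 2F + log 2 − log m_t. Then Var( ∑_{t=1}^T γ^{t−1} ρ_{1:t} r_t ) ≥ ∑_{t ∈ S} ( γ^{2t−2} m_t² / 4 ) exp( t c² / (8 d²) ) − (v^π)². -/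

import Mathlib

/-! On the event `M_t < t c / 2` the decomposition and the condition defining `S` force
`ρ_{1:t} ≤ m_t / 2`, so at least half of the mean `m_t` of `ρ_{1:t} r_t` sits on the event
`M_t ≥ t c / 2`, whose probability is at most `exp (-t c² / (8 d²))` by Azuma–Hoeffding.
Cauchy–Schwarz on that event gives `E[(ρ_{1:t} r_t)²] ≥ (m_t² / 4) exp (t c² / (8 d²))`, and as all
terms are nonnegative, the second moment of the weighted sum dominates the sum of these bounds. -/

open MeasureTheory ProbabilityTheory Finset Real

lemma Real.exp_mul_le_cosh_add_sinh_div_mul {l x d : ℝ} (hd : 0 < d) (hx : |x| ≤ d) :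
    exp (l * x) ≤ cosh (l * d) + sinh (l * d) / d * x := by
  obtain ⟨hx₁, hx₂⟩ := abs_le.1 hx
  have h := convexOn_exp.2 (Set.mem_univ (l * d)) (Set.mem_univ (-(l * d)))
    (div_nonneg (by linarith) (by linarith) : 0 ≤ (d + x) / (2 * d))
    (div_nonneg (by linarith) (by linarith) : 0 ≤ (d - x) / (2 * d))
    (by field_simp; ring)
  simp only [smul_eq_mul] at h
  calc exp (l * x) = exp ((d + x) / (2 * d) * (l * d) + (d - x) / (2 * d) * -(l * d)) := by
        congr 1; field_simp; ring
    _ ≤ _ := h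
    _ = _ := by rw [cosh_eq, sinh_eq]; field_simp; ring

section Azuma

variable {Ω : Type*} {m0 : MeasurableSpace Ω} {μ : Measure Ω} {X : Ω → ℝ} {a : ℝ}

lemma integrable_exp_mul_of_abs_le [IsFiniteMeasure μ] (hX : AEMeasurable X μ)
    (hXa : ∀ᵐ ω ∂μ, |X ω| ≤ a) (l : ℝ) : Integrable (fun ω ↦ exp (l * X ω)) μ :=
  integrable_exp_mul_of_mem_Icc hX (hXa.mono fun _ h ↦ abs_le.1 h)

/-- Conditional Hoeffding lemma: the bound of `exp (l * x)` by its chord over `[-d, d]` is affine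
in `x`, so it survives conditioning on a centred `X`. -/
lemma condExp_exp_mul_ae_le_cosh [IsFiniteMeasure μ] {m : MeasurableSpace Ω} (hm : m ≤ m0)
    {d : ℝ} (hd : 0 < d) (hX : Integrable X μ) (hXd : ∀ᵐ ω ∂μ, |X ω| ≤ d)
    (hX0 : μ[X|m] =ᵐ[μ] 0) (l : ℝ) :
    μ[fun ω ↦ exp (l * X ω)|m] ≤ᵐ[μ] fun _ ↦ cosh (l * d) := by
  have hchord : μ[fun ω ↦ exp (l * X ω)|m] ≤ᵐ[μ]
      μ[fun ω ↦ cosh (l * d) + sinh (l * d) / d * X ω|m] :=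
    condExp_mono (integrable_exp_mul_of_abs_le hX.aemeasurable hXd l)
      ((integrable_const _).add (hX.const_mul _))
      (hXd.mono fun _ h ↦ exp_mul_le_cosh_add_sinh_div_mul hd h)
  have haffine : μ[fun ω ↦ cosh (l * d) + sinh (l * d) / d * X ω|m] =ᵐ[μ]
      fun _ ↦ cosh (l * d) := by
    change μ[(fun _ ↦ cosh (l * d)) + (sinh (l * d) / d) • X|m] =ᵐ[μ] _
    filter_upwards [condExp_add (m := m) (integrable_const (cosh (l * d)))
        (hX.smul (sinh (l * d) / d)), condExp_smul (μ := μ) (m := m) (sinh (l * d) / d) X, hX0]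
      with ω hadd hsmul h0
    rw [hadd, Pi.add_apply, hsmul, condExp_const hm, Pi.smul_apply, h0]
    simp
  exact hchord.trans haffine.le

variable {ℱ : Filtration ℕ m0} {M : ℕ → Ω → ℝ} {d : ℝ} {n : ℕ}

lemma MeasureTheory.Martingale.condExp_sub_ae_eq_zero [IsFiniteMeasure μ]
    (hM : Martingale M ℱ μ) {i j : ℕ} (hij : i ≤ j) : μ[M j - M i|ℱ i] =ᵐ[μ] 0 := by
  filter_upwards [condExp_sub (m := ℱ i) (hM.integrable j) (hM.integrable i),
    hM.condExp_ae_eq hij] with ω hsub hj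
  rw [hsub, Pi.sub_apply, hj, condExp_of_stronglyMeasurable (ℱ.le i) (hM.stronglyAdapted i)
    (hM.integrable i)]
  exact sub_self _

lemma ae_abs_le_mul_of_abs_sub_le (hM0 : M 0 = 0)
    (hinc : ∀ k < n, ∀ᵐ ω ∂μ, |M (k + 1) ω - M k ω| ≤ d) : ∀ᵐ ω ∂μ, |M n ω| ≤ n * d := by
  have hall : ∀ᵐ ω ∂μ, ∀ k, k < n → |M (k + 1) ω - M k ω| ≤ d :=
    ae_all_iff.2 fun k ↦ Filter.eventually_imp_distrib_left.2 (hinc k)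
  filter_upwards [hall] with ω hω
  have := dist_le_range_sum_of_dist_le (f := fun k ↦ M k ω) (d := fun _ ↦ d) n fun hk ↦ by
    rw [Real.dist_eq, abs_sub_comm]; exact hω _ hk
  simpa [Real.dist_eq, hM0, abs_sub_comm] using this

lemma MeasureTheory.Martingale.mgf_le_cosh_pow [IsProbabilityMeasure μ]
    (hM : Martingale M ℱ μ) (hM0 : M 0 = 0) (hd : 0 < d)
    (hinc : ∀ k < n, ∀ᵐ ω ∂μ, |M (k + 1) ω - M k ω| ≤ d) (l : ℝ) :
    mgf (M n) μ l ≤ cosh (l * d) ^ n := by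
  induction n with
  | zero => simp [hM0]
  | succ n ih =>
    have hexp : ∀ k ≤ n + 1, Integrable (fun ω ↦ exp (l * M k ω)) μ := fun k hk ↦
      integrable_exp_mul_of_abs_le (hM.integrable k).aemeasurable
        (ae_abs_le_mul_of_abs_sub_le hM0 fun i hi ↦ hinc i (by omega)) l
    have hΔ : ∀ᵐ ω ∂μ, |(M (n + 1) - M n) ω| ≤ d := hinc n n.lt_succ_self
    have hΔint : Integrable (M (n + 1) - M n) μ := (hM.integrable _).sub (hM.integrable _)
    have hsplit : (fun ω ↦ exp (l * M (n + 1) ω)) =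
        (fun ω ↦ exp (l * M n ω)) * fun ω ↦ exp (l * (M (n + 1) - M n) ω) := by
      ext ω; simp only [Pi.mul_apply, Pi.sub_apply, ← exp_add]; ring_nf
    have hpull := condExp_mul_of_stronglyMeasurable_left (m := ℱ n)
      (continuous_exp.comp_stronglyMeasurable ((hM.stronglyAdapted n).const_mul l))
      (hsplit ▸ hexp (n + 1) le_rfl)
      (integrable_exp_mul_of_abs_le hΔint.aemeasurable hΔ l)
    have hcosh := condExp_exp_mul_ae_le_cosh (ℱ.le n) hd hΔint hΔ
      (hM.condExp_sub_ae_eq_zero n.le_succ) l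
    calc mgf (M (n + 1)) μ l
        = ∫ ω, (μ[(fun ω ↦ exp (l * M n ω)) *
            fun ω ↦ exp (l * (M (n + 1) - M n) ω)|ℱ n]) ω ∂μ := by
          rw [integral_condExp (ℱ.le n), ← hsplit, mgf]
      _ ≤ ∫ ω, cosh (l * d) * exp (l * M n ω) ∂μ := by
          refine integral_mono_ae integrable_condExp ((hexp n n.le_succ).const_mul _) ?_
          filter_upwards [hpull, hcosh] with ω hpullω hcoshω
          rw [hpullω, Pi.mul_apply, mul_comm]
          exact mul_le_mul_of_nonneg_right hcoshω (exp_pos _).le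
      _ = cosh (l * d) * mgf (M n) μ l := integral_const_mul _ _
      _ ≤ cosh (l * d) ^ (n + 1) := by
          rw [pow_succ']
          exact mul_le_mul_of_nonneg_left (ih fun k hk ↦ hinc k (by omega)) (cosh_pos _).le

lemma MeasureTheory.Martingale.hasSubgaussianMGF [IsProbabilityMeasure μ] (hM : Martingale M ℱ μ)
    (hM0 : M 0 = 0) (hd : 0 < d) (hinc : ∀ k < n, ∀ᵐ ω ∂μ, |M (k + 1) ω - M k ω| ≤ d) :
    HasSubgaussianMGF (M n) ⟨n * d ^ 2, by positivity⟩ μ where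
  integrable_exp_mul :=
    integrable_exp_mul_of_abs_le (hM.integrable n).aemeasurable
      (ae_abs_le_mul_of_abs_sub_le hM0 hinc)
  mgf_le l := calc
    mgf (M n) μ l ≤ cosh (l * d) ^ n := hM.mgf_le_cosh_pow hM0 hd hinc l
    _ ≤ exp ((l * d) ^ 2 / 2) ^ n := by gcongr; exact cosh_le_exp_half_sq _
    _ = exp (n * d ^ 2 * l ^ 2 / 2) := by rw [← exp_nat_mul]; ring_nf

/-- **Azuma–Hoeffding inequality** for martingales with bounded increments. -/
lemma MeasureTheory.Martingale.measureReal_ge_le [IsProbabilityMeasure μ] (hM : Martingale M ℱ μ)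
    (hM0 : M 0 = 0) (hd : 0 < d) (hinc : ∀ k < n, ∀ᵐ ω ∂μ, |M (k + 1) ω - M k ω| ≤ d)
    {ε : ℝ} (hε : 0 ≤ ε) : μ.real {ω | ε ≤ M n ω} ≤ exp (-ε ^ 2 / (2 * (n * d ^ 2))) :=
  (hM.hasSubgaussianMGF hM0 hd hinc).measure_ge_le hε

end Azuma

section SecondMoment

variable {Ω : Type*} {m0 : MeasurableSpace Ω} {μ : Measure Ω} {f : Ω → ℝ}

/-- Cauchy–Schwarz: the quadratic `x ↦ ∫ ω in s, (x * f ω - 1) ^ 2 ∂μ` is nonnegative, so its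
discriminant is not positive. -/
lemma sq_setIntegral_le_measureReal_mul_setIntegral_sq [IsFiniteMeasure μ] (hf : MemLp f 2 μ)
    (s : Set Ω) : (∫ ω in s, f ω ∂μ) ^ 2 ≤ μ.real s * ∫ ω in s, f ω ^ 2 ∂μ := by
  have hf₁ : IntegrableOn f s μ := (hf.integrable one_le_two).integrableOn
  have hf₂ : IntegrableOn (fun ω ↦ f ω ^ 2) s μ := hf.integrable_sq.integrableOn
  have hquad : ∀ x : ℝ, 0 ≤ (∫ ω in s, f ω ^ 2 ∂μ) * (x * x) + (-2 * ∫ ω in s, f ω ∂μ) * x +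
      μ.real s := fun x ↦ by
    have hexpand : ∫ ω in s, (x * f ω - 1) ^ 2 ∂μ = (∫ ω in s, f ω ^ 2 ∂μ) * (x * x) +
        (-2 * ∫ ω in s, f ω ∂μ) * x + μ.real s := by
      have hpoint : ∀ ω, (x * f ω - 1) ^ 2 = x * x * f ω ^ 2 - 2 * x * f ω + 1 := fun ω ↦ by ring
      simp_rw [hpoint]
      rw [integral_add (f := fun ω ↦ x * x * f ω ^ 2 - 2 * x * f ω)
          ((hf₂.const_mul _).sub (hf₁.const_mul _)) (integrable_const 1),
        integral_sub (hf₂.const_mul _) (hf₁.const_mul _), integral_const_mul, integral_const_mul,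
        setIntegral_const, smul_eq_mul, mul_one]
      ring
    exact hexpand ▸ integral_nonneg fun _ ↦ sq_nonneg _
  have := discrim_le_zero hquad
  rw [discrim] at this
  nlinarith

lemma sq_integral_sub_le_measureReal_mul_integral_sq [IsProbabilityMeasure μ] (hf : MemLp f 2 μ)
    {s : Set Ω} (hs : MeasurableSet s) {a : ℝ} (ha : 0 ≤ a) (haf : a ≤ ∫ ω, f ω ∂μ)
    (hfa : ∀ᵐ ω ∂μ, ω ∉ s → f ω ≤ a) :
    (∫ ω, f ω ∂μ - a) ^ 2 ≤ μ.real s * ∫ ω, f ω ^ 2 ∂μ := by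
  have hf₁ : Integrable f μ := hf.integrable one_le_two
  have hcompl : ∫ ω in sᶜ, f ω ∂μ ≤ a := calc
    ∫ ω in sᶜ, f ω ∂μ ≤ ∫ _ in sᶜ, a ∂μ :=
      setIntegral_mono_on_ae hf₁.integrableOn (integrableOn_const (measure_ne_top _ _)) hs.compl hfa
    _ = μ.real sᶜ * a := by rw [setIntegral_const, smul_eq_mul]
    _ ≤ a := mul_le_of_le_one_left ha measureReal_le_one
  have hon : ∫ ω, f ω ∂μ - a ≤ ∫ ω in s, f ω ∂μ := by
    linarith [integral_add_compl hs hf₁]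
  calc (∫ ω, f ω ∂μ - a) ^ 2 ≤ (∫ ω in s, f ω ∂μ) ^ 2 := pow_le_pow_left₀ (sub_nonneg.2 haf) hon 2
    _ ≤ μ.real s * ∫ ω in s, f ω ^ 2 ∂μ := sq_setIntegral_le_measureReal_mul_setIntegral_sq hf s
    _ ≤ μ.real s * ∫ ω, f ω ^ 2 ∂μ := mul_le_mul_of_nonneg_left
      (setIntegral_le_integral hf.integrable_sq (ae_of_all _ fun _ ↦ sq_nonneg _))
      measureReal_nonneg

lemma sum_sq_mul_integral_sq_le_integral_sq_sum {ι : Type*} {s t : Finset ι} (hst : s ⊆ t)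
    {w : ι → ℝ} {X : ι → Ω → ℝ} (hw : ∀ i ∈ t, 0 ≤ w i) (hX : ∀ i ∈ t, MemLp (X i) 2 μ)
    (hX₀ : ∀ i ∈ t, ∀ ω, 0 ≤ X i ω) :
    ∑ i ∈ s, w i ^ 2 * ∫ ω, X i ω ^ 2 ∂μ ≤ ∫ ω, (∑ i ∈ t, w i * X i ω) ^ 2 ∂μ := by
  have hwX : ∀ i ∈ t, MemLp (fun ω ↦ w i * X i ω) 2 μ := fun i hi ↦ (hX i hi).const_mul _
  have hsq : ∀ i ∈ s, Integrable (fun ω ↦ (w i * X i ω) ^ 2) μ := fun i hi ↦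
    (hwX i (hst hi)).integrable_sq
  simp_rw [← integral_const_mul, ← mul_pow]
  rw [← integral_finsetSum s hsq]
  refine integral_mono (integrable_finsetSum s hsq) (memLp_finsetSum t hwX).integrable_sq
    fun ω ↦ ?_
  calc ∑ i ∈ s, (w i * X i ω) ^ 2 ≤ ∑ i ∈ t, (w i * X i ω) ^ 2 :=
        sum_le_sum_of_subset_of_nonneg hst fun _ _ _ ↦ sq_nonneg _
    _ ≤ (∑ i ∈ t, w i * X i ω) ^ 2 :=
        sum_sq_le_sq_sum_of_nonneg fun i hi ↦ mul_nonneg (hw i hi) (hX₀ i hi ω)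

lemma sq_integral_div_four_mul_exp_le_integral_sq [IsProbabilityMeasure μ] (hf : MemLp f 2 μ)
    {s : Set Ω} (hs : MeasurableSet s) {b : ℝ} (hμs : μ.real s ≤ exp (-b))
    (hf₀ : 0 ≤ ∫ ω, f ω ∂μ) (hfs : ∀ᵐ ω ∂μ, ω ∉ s → f ω ≤ (∫ ω, f ω ∂μ) / 2) :
    (∫ ω, f ω ∂μ) ^ 2 / 4 * exp b ≤ ∫ ω, f ω ^ 2 ∂μ := by
  have hCS := sq_integral_sub_le_measureReal_mul_integral_sq hf hs (by positivity) (by linarith) hfs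
  rw [sub_half] at hCS
  have htail := hCS.trans (mul_le_mul_of_nonneg_right hμs (integral_nonneg fun _ ↦ sq_nonneg _))
  rw [exp_neg] at htail
  calc (∫ ω, f ω ∂μ) ^ 2 / 4 * exp b = ((∫ ω, f ω ∂μ) / 2) ^ 2 * exp b := by ring
    _ ≤ (exp b)⁻¹ * (∫ ω, f ω ^ 2 ∂μ) * exp b := by gcongr
    _ = ∫ ω, f ω ^ 2 ∂μ := by field_simp

end SecondMoment

section LogDecomposition

variable {Ω : Type*} {m0 : MeasurableSpace Ω} {μ : Measure Ω} [IsProbabilityMeasure μ]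
  {ℱ : Filtration ℕ m0} {M : ℕ → Ω → ℝ} {n : ℕ} {c d F : ℝ} {ρ r D : Ω → ℝ}

lemma sq_integral_div_four_mul_exp_le_integral_sq_of_log_eq (hM : Martingale M ℱ μ)
    (hM0 : M 0 = 0) (hd : 0 < d) (hinc : ∀ k < n, ∀ᵐ ω ∂μ, |M (k + 1) ω - M k ω| ≤ d)
    (hc : 0 ≤ c) (hρ : ∀ ω, 0 ≤ ρ ω) (hr : ∀ ω, r ω ≤ 1) (hD : ∀ᵐ ω ∂μ, D ω ≤ 2 * F)
    (hlog : ∀ᵐ ω ∂μ, log (ρ ω) = -(n : ℝ) * c + D ω + M n ω)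
    (hρr : MemLp (fun ω ↦ ρ ω * r ω) 2 μ) (hm : 0 < ∫ ω, ρ ω * r ω ∂μ)
    (hthreshold : 2 * F + log 2 - log (∫ ω, ρ ω * r ω ∂μ) ≤ n * c / 2) :
    (∫ ω, ρ ω * r ω ∂μ) ^ 2 / 4 * exp (n * c ^ 2 / (8 * d ^ 2)) ≤
      ∫ ω, (ρ ω * r ω) ^ 2 ∂μ := by
  set A := {ω | n * c / 2 ≤ M n ω}
  have hA : MeasurableSet A :=
    measurableSet_le measurable_const ((hM.stronglyAdapted n).mono (ℱ.le n)).measurable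
  have htail : μ.real A ≤ exp (-(n * c ^ 2 / (8 * d ^ 2))) := by
    convert hM.measureReal_ge_le (ε := n * c / 2) hM0 hd hinc (by positivity) using 2
    rcases eq_or_ne n 0 with rfl | hn₀
    · simp -- both exponents are `0`, the right one as the junk value `0 / 0`
    · field_simp
      ring
  refine sq_integral_div_four_mul_exp_le_integral_sq hρr hA htail hm.le ?_
  filter_upwards [hlog, hD] with ω hlogω hDω hω
  have hlog_le : log (ρ ω) ≤ log ((∫ ω, ρ ω * r ω ∂μ) / 2) := by
    rw [hlogω, log_div hm.ne' two_ne_zero]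
    linarith [not_le.1 (show ¬n * c / 2 ≤ M n ω from hω)]
  calc ρ ω * r ω ≤ ρ ω := mul_le_of_le_one_right (hρ ω) (hr ω)
    _ ≤ exp (log (ρ ω)) := le_exp_log _
    _ ≤ (∫ ω, ρ ω * r ω ∂μ) / 2 := (exp_le_exp.2 hlog_le).trans_eq (exp_log (by positivity))

end LogDecomposition

theorem pdis_variance_exponential_lower_bound_general
    {Ω : Type*} {m0 : MeasurableSpace Ω} (P : Measure Ω) [IsProbabilityMeasure P]
    (T : ℕ) (ℱ : MeasureTheory.Filtration ℕ m0)
    (γ : ℝ) (hγ : γ ∈ Set.Ioc (0 : ℝ) 1)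
    (ρ : ℕ → Ω → ℝ)
    (hρ_nonneg : ∀ t ω, 0 ≤ ρ t ω)
    (ρprod : ℕ → Ω → ℝ)
    (hρprod : ∀ t ω, ρprod t ω = ∏ k ∈ Icc 1 t, ρ k ω)
    (r : ℕ → Ω → ℝ)
    (hr_range : ∀ t ω, r t ω ∈ Set.Icc (0 : ℝ) 1)
    (c d F : ℝ) (hc_pos : 0 < c) (hd_pos : 0 < d)
    (M : ℕ → Ω → ℝ) (hM : Martingale M ℱ P) (hM0 : ∀ ω, M 0 ω = 0)
    (hM_bdd : ∀ t, 1 ≤ t → t ≤ T → ∀ᵐ ω ∂P, |M t ω - M (t - 1) ω| ≤ d)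
    (D : ℕ → Ω → ℝ) (hD_bdd : ∀ t, 1 ≤ t → t ≤ T → ∀ᵐ ω ∂P, |D t ω| ≤ 2 * F)
    (h_decomp : ∀ t, 1 ≤ t → t ≤ T →
      ∀ᵐ ω ∂P, Real.log (ρprod t ω) = -(t : ℝ) * c + D t ω + M t ω)
    (m' : ℕ → ℝ) (hm' : ∀ t, m' t = ∫ ω, ρprod t ω * r t ω ∂P)
    (h_sq : ∀ t, 1 ≤ t → t ≤ T → MemLp (fun ω => ρprod t ω * r t ω) 2 P)
    (vπ : ℝ)
    (S : Finset ℕ)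
    (hS : ∀ t, t ∈ S ↔ t ∈ Icc 1 T ∧ 0 < m' t ∧
      (t : ℝ) * c / 2 ≥ 2 * F + Real.log 2 - Real.log (m' t)) :
    (∫ ω, (∑ t ∈ Icc 1 T, γ ^ (t - 1) * ρprod t ω * r t ω) ^ 2 ∂P) - vπ ^ 2
      ≥ (∑ t ∈ S, γ ^ (2 * t - 2) * (m' t) ^ 2 / 4
          * Real.exp ((t : ℝ) * c ^ 2 / (8 * d ^ 2))) - vπ ^ 2 := by
  have hρprod_nonneg : ∀ t ω, 0 ≤ ρprod t ω := fun t ω ↦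
    hρprod t ω ▸ prod_nonneg fun k _ ↦ hρ_nonneg k ω
  rw [ge_iff_le, sub_le_sub_iff_right]
  calc ∑ t ∈ S, γ ^ (2 * t - 2) * m' t ^ 2 / 4 * exp (t * c ^ 2 / (8 * d ^ 2))
      ≤ ∑ t ∈ S, (γ ^ (t - 1)) ^ 2 * ∫ ω, (ρprod t ω * r t ω) ^ 2 ∂P := by
        refine sum_le_sum fun t ht ↦ ?_
        obtain ⟨htT, hm_pos, hmt⟩ := (hS t).1 ht
        obtain ⟨ht1, htT⟩ := mem_Icc.1 htT
        rw [hm'] at hm_pos hmt ⊢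
        rw [← pow_mul, show (t - 1) * 2 = 2 * t - 2 by omega, mul_div_assoc, mul_assoc]
        refine mul_le_mul_of_nonneg_left ?_ (pow_nonneg hγ.1.le _)
        exact sq_integral_div_four_mul_exp_le_integral_sq_of_log_eq hM (funext hM0) hd_pos
          (fun k hk ↦ by simpa using hM_bdd (k + 1) (by omega) (by omega)) hc_pos.le
          (hρprod_nonneg t) (fun ω ↦ (hr_range t ω).2)
          ((hD_bdd t ht1 htT).mono fun _ ↦ le_of_abs_le) (h_decomp t ht1 htT)
          (h_sq t ht1 htT) hm_pos hmt
    _ ≤ ∫ ω, (∑ t ∈ Icc 1 T, γ ^ (t - 1) * (ρprod t ω * r t ω)) ^ 2 ∂P :=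
        sum_sq_mul_integral_sq_le_integral_sq_sum (fun t ht ↦ ((hS t).1 ht).1)
          (fun _ _ ↦ pow_nonneg hγ.1.le _)
          (fun t ht ↦ h_sq t (mem_Icc.1 ht).1 (mem_Icc.1 ht).2)
          fun t _ ω ↦ mul_nonneg (hρprod_nonneg t ω) (hr_range t ω).1
    _ = ∫ ω, (∑ t ∈ Icc 1 T, γ ^ (t - 1) * ρprod t ω * r t ω) ^ 2 ∂P := by
        simp only [mul_assoc]

/-- In the likelihood-ratio filtration setup, suppose
`log ρ_{1:t} = −tc + D_t + M_t` for each `1 ≤ t ≤ T`, where `M` is a martingale with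
`M_0 = 0` and increments bounded by `d`, and `|D_t| ≤ 2F` a.s. With
`m_t := E[ρ_{1:t} r_t]` (each `ρ_{1:t} r_t` square-integrable),
`v^π := E[∑_t γ^{t−1} ρ_{1:t} r_t]`, and `S` the set of `t ∈ {1,…,T}` with `m_t > 0`
and `tc/2 ≥ 2F + log 2 − log m_t`, we have
`Var(v̂_PDIS) ≥ ∑_{t∈S} (γ^{2t−2} m_t²/4) exp(tc²/(8d²)) − (v^π)²`,
with `Var(X) := E[X²] − (E[X])²`. -/
theorem pdis_variance_exponential_lower_bound
    {Ω : Type*} {m0 : MeasurableSpace Ω} (P : Measure Ω) [IsProbabilityMeasure P]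
    (T : ℕ) (ℱ : MeasureTheory.Filtration ℕ m0)
    (γ : ℝ) (hγ : γ ∈ Set.Ioc (0 : ℝ) 1)
    (ρ : ℕ → Ω → ℝ)
    (hρ_meas : ∀ t, 1 ≤ t → t ≤ T → Measurable[ℱ t] (ρ t))
    (hρ_nonneg : ∀ t ω, 0 ≤ ρ t ω)
    (hρ_int : ∀ t, 1 ≤ t → t ≤ T → Integrable (ρ t) P)
    (hρ_cond : ∀ t, 1 ≤ t → t ≤ T → P[ρ t | ℱ (t - 1)] =ᵐ[P] fun _ => (1 : ℝ))
    (ρprod : ℕ → Ω → ℝ)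
    (hρprod : ∀ t ω, ρprod t ω = ∏ k ∈ Icc 1 t, ρ k ω)
    (r : ℕ → Ω → ℝ)
    (hr_meas : ∀ t, 1 ≤ t → t ≤ T → Measurable[ℱ t] (r t))
    (hr_range : ∀ t ω, r t ω ∈ Set.Icc (0 : ℝ) 1)
    (c d F : ℝ) (hc_pos : 0 < c) (hd_pos : 0 < d) (hF_nonneg : 0 ≤ F)
    (M : ℕ → Ω → ℝ) (hM : Martingale M ℱ P) (hM0 : ∀ ω, M 0 ω = 0)
    (hM_bdd : ∀ t, 1 ≤ t → t ≤ T → ∀ᵐ ω ∂P, |M t ω - M (t - 1) ω| ≤ d)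
    (D : ℕ → Ω → ℝ) (hD_bdd : ∀ t, 1 ≤ t → t ≤ T → ∀ᵐ ω ∂P, |D t ω| ≤ 2 * F)
    (h_decomp : ∀ t, 1 ≤ t → t ≤ T →
      ∀ᵐ ω ∂P, Real.log (ρprod t ω) = -(t : ℝ) * c + D t ω + M t ω)
    (m' : ℕ → ℝ) (hm' : ∀ t, m' t = ∫ ω, ρprod t ω * r t ω ∂P)
    (h_sq : ∀ t, 1 ≤ t → t ≤ T → MemLp (fun ω => ρprod t ω * r t ω) 2 P)
    (vπ : ℝ)
    (hvπ : vπ = ∫ ω, ∑ t ∈ Icc 1 T, γ ^ (t - 1) * ρprod t ω * r t ω ∂P)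
    (S : Finset ℕ)
    (hS : ∀ t, t ∈ S ↔ t ∈ Icc 1 T ∧ 0 < m' t ∧
      (t : ℝ) * c / 2 ≥ 2 * F + Real.log 2 - Real.log (m' t)) :
    (∫ ω, (∑ t ∈ Icc 1 T, γ ^ (t - 1) * ρprod t ω * r t ω) ^ 2 ∂P) - vπ ^ 2
      ≥ (∑ t ∈ S, γ ^ (2 * t - 2) * (m' t) ^ 2 / 4
          * Real.exp ((t : ℝ) * c ^ 2 / (8 * d ^ 2))) - vπ ^ 2 :=
  pdis_variance_exponential_lower_bound_general P T ℱ γ hγ ρ hρ_nonneg ρprod hρprod r hr_range c d F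
    hc_pos hd_pos M hM hM0 hM_bdd D hD_bdd h_decomp m' hm' h_sq vπ S hS
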